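/- Let G be a non-elementary word-hyperbolic group acting properly discontinuously by isometries on a proper geodesic Gromov-hyperbolic space Y without accidental parabolics, and suppose the Cannon–Thurston map i : ∂G → ∂Y exists. Then there exists a point z ∈ i(∂G) which is a non-conical limit point for the action of G on ∂Y if and only if i is not injective. -/

import Mathlib

open Filter Topology Metric Pointwise

/-- The maps `z ↦ g n • z` converge to the constant map with value `b`, uniformly on
compact subsets of `Z` avoiding the point `a` (i.e. locally uniformly on `Z \ {a}`). -/
def ConvLocUnif {G Z : Type*} [Group G] [MetricSpace Z] [MulAction G Z]
    (g : ℕ → G) (a b : Z) : Prop :=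
  ∀ K : Set Z, IsCompact K → a ∉ K →
    TendstoUniformlyOn (fun n z => g n • z) (fun _ => b) atTop K

/-- The action of `G` on the compact metrizable space `Z` is a convergence action: it is an
action by homeomorphisms such that every injective sequence in `G` has a subsequence
converging locally uniformly, away from one point `a`, to a constant map with value `b`. -/
def IsConvergenceAction (G Z : Type*) [Group G] [MetricSpace Z] [MulAction G Z] : Prop :=
  (∀ g : G, Continuous fun z : Z => g • z) ∧
  ∀ g : ℕ → G, Function.Injective g →
    ∃ (a b : Z) (φ : ℕ → ℕ), StrictMono φ ∧ ConvLocUnif (fun k => g (φ k)) a b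

/-- `g` is a conical sequence for `z` with pole pair `(zm, zp)`. -/
def IsConicalSeq {G Z : Type*} [Group G] [MetricSpace Z] [MulAction G Z]
    (g : ℕ → G) (z zm zp : Z) : Prop :=
  Function.Injective g ∧ zm ≠ zp ∧
    Tendsto (fun n => g n • z) atTop (𝓝 zp) ∧ ConvLocUnif g z zm

/-- `z` is a conical limit point for the action of `G` on `Z`. -/
def IsConicalLimitPoint (G : Type*) {Z : Type*} [Group G] [MetricSpace Z] [MulAction G Z]
    (z : Z) : Prop :=
  ∃ (g : ℕ → G) (zm zp : Z), IsConicalSeq g z zm zp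

/-- `g` is a conical sequence for `z` with pole pair `(zm, zp)`, for the restricted
action of `G` on an invariant subset `Z' ⊆ Z`. -/
def IsConicalSeqOn {G Z : Type*} [Group G] [MetricSpace Z] [MulAction G Z]
    (Z' : Set Z) (g : ℕ → G) (z zm zp : Z) : Prop :=
  zm ∈ Z' ∧ zp ∈ Z' ∧ Function.Injective g ∧ zm ≠ zp ∧
    Tendsto (fun n => g n • z) atTop (𝓝 zp) ∧
    ∀ K : Set Z, IsCompact K → K ⊆ Z' → z ∉ K →
      TendstoUniformlyOn (fun n w => g n • w) (fun _ => zm) atTop K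

/-- `z` is a conical limit point for the restricted action of `G` on `Z' ⊆ Z`. -/
def IsConicalLimitPointOn (G : Type*) {Z : Type*} [Group G] [MetricSpace Z] [MulAction G Z]
    (Z' : Set Z) (z : Z) : Prop :=
  ∃ (g : ℕ → G) (zm zp : Z), IsConicalSeqOn Z' g z zm zp

/-- The action of `G` on `Z` is elementary: `G` is finite or there is a nonempty invariant
subset of cardinality at most 2. -/
def IsElementaryAction (G Z : Type*) [Group G] [MetricSpace Z] [MulAction G Z] : Prop :=
  Finite G ∨ ∃ S : Set Z, S.Nonempty ∧ S.encard ≤ 2 ∧ ∀ g : G, g • S = S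

/-- A Cannon–Thurston map: a continuous `G`-equivariant map from the boundary `B = ∂G` to `Z`. -/
def IsCannonThurston (G : Type*) {B Z : Type*} [Group G] [MetricSpace B] [MulAction G B]
    [MetricSpace Z] [MulAction G Z] (i : B → Z) : Prop :=
  Continuous i ∧ ∀ (g : G) (x : B), i (g • x) = g • i x

/-- `B` is (a realization of) the Gromov boundary of the word-hyperbolic group `G`:
the action of `G` on `B` is a convergence action in which every point is conical
(a uniform convergence action), which by Bowditch's theorem characterizes
word-hyperbolic groups acting on their Gromov boundary. -/
def IsHypBoundary (G B : Type*) [Group G] [MetricSpace B] [CompactSpace B]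
    [MulAction G B] : Prop :=
  IsConvergenceAction G B ∧ ∀ x : B, IsConicalLimitPoint G x

/-- `g` acts loxodromically on `Z` with repelling point `am` and attracting point `ap`. -/
def IsLoxodromicOn {G Z : Type*} [Group G] [MetricSpace Z] [MulAction G Z]
    (g : G) (am ap : Z) : Prop :=
  ¬ IsOfFinOrder g ∧ am ≠ ap ∧ {z : Z | g • z = z} = {am, ap} ∧
    (∀ K : Set Z, IsCompact K → am ∉ K →
      TendstoUniformlyOn (fun (n : ℕ) z => g ^ n • z) (fun _ => ap) atTop K) ∧
    (∀ K : Set Z, IsCompact K → ap ∉ K →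
      TendstoUniformlyOn (fun (n : ℕ) z => g⁻¹ ^ n • z) (fun _ => am) atTop K)

/-- `g` acts parabolically on `Z`: it has infinite order and exactly one fixed point. -/
def IsParabolicOn {G : Type*} (Z : Type*) [Group G] [MetricSpace Z] [MulAction G Z]
    (g : G) : Prop :=
  ¬ IsOfFinOrder g ∧ ∃ a : Z, {z : Z | g • z = z} = {a}

/-- `x ∈ ∂G` is asymptotic to the lamination `L_i`: for every conical sequence for `x`
with pole pair `(xm, xp)` one has `i xm = i xp`. -/
def AsymptoticTo (G : Type*) {B Z : Type*} [Group G] [MetricSpace B] [MulAction G B]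
    [MetricSpace Z] [MulAction G Z] (i : B → Z) (x : B) : Prop :=
  ∀ (g : ℕ → G) (xm xp : B), IsConicalSeq g x xm xp → i xm = i xp


/-- `σ` restricted to `[a,b]` is a geodesic (parametrized by arclength). -/
def IsGeodesicOn {X : Type*} [MetricSpace X] (σ : ℝ → X) (a b : ℝ) : Prop :=
  ∀ s ∈ Set.Icc a b, ∀ t ∈ Set.Icc a b, dist (σ s) (σ t) = |s - t|

/-- `X` is a geodesic metric space. -/
def IsGeodesicSpace (X : Type*) [MetricSpace X] : Prop :=
  ∀ a b : X, ∃ σ : ℝ → X, σ 0 = a ∧ σ (dist a b) = b ∧ IsGeodesicOn σ 0 (dist a b)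

/-- `X` is `δ`-hyperbolic: geodesic triangles are `δ`-slim. -/
def SlimTriangles (X : Type*) [MetricSpace X] (δ : ℝ) : Prop :=
  ∀ (L₁ L₂ L₃ : ℝ) (σ₁ σ₂ σ₃ : ℝ → X),
    IsGeodesicOn σ₁ 0 L₁ → IsGeodesicOn σ₂ 0 L₂ → IsGeodesicOn σ₃ 0 L₃ →
    σ₁ 0 = σ₃ 0 → σ₁ L₁ = σ₂ 0 → σ₂ L₂ = σ₃ L₃ →
    ∀ t ∈ Set.Icc (0:ℝ) L₃,
      Metric.infDist (σ₃ t) (σ₁ '' Set.Icc 0 L₁ ∪ σ₂ '' Set.Icc 0 L₂) ≤ δ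

/-- A geodesic ray, parametrized by `[0,∞)`. -/
def IsGeodesicRay {X : Type*} [MetricSpace X] (ρ : ℝ → X) : Prop :=
  ∀ s ∈ Set.Ici (0:ℝ), ∀ t ∈ Set.Ici (0:ℝ), dist (ρ s) (ρ t) = |s - t|

/-- A bi-infinite geodesic. -/
def IsGeodesicLine {X : Type*} [MetricSpace X] (γ : ℝ → X) : Prop :=
  ∀ s t : ℝ, dist (γ s) (γ t) = |s - t|

/-- A bi-infinite `r`-local geodesic. -/
def IsLocalGeodesic {X : Type*} [MetricSpace X] (r : ℝ) (γ : ℝ → X) : Prop :=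
  ∀ s t : ℝ, |s - t| ≤ r → dist (γ s) (γ t) = |s - t|

/-- An `r`-local geodesic on the interval `[a,b]`. -/
def IsLocalGeodesicOn {X : Type*} [MetricSpace X] (r : ℝ) (γ : ℝ → X) (a b : ℝ) : Prop :=
  ∀ s ∈ Set.Icc a b, ∀ t ∈ Set.Icc a b, |s - t| ≤ r → dist (γ s) (γ t) = |s - t|


/-- The restricted action of `G` on an invariant subset `Z' ⊆ Z` is a convergence action. -/
def IsConvergenceActionOn (G : Type*) {Z : Type*} [Group G] [MetricSpace Z] [MulAction G Z]
    (Z' : Set Z) : Prop :=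
  (∀ g : G, Continuous fun z : Z => g • z) ∧ (∀ g : G, g • Z' = Z') ∧
  ∀ g : ℕ → G, Function.Injective g →
    ∃ a ∈ Z', ∃ b ∈ Z', ∃ φ : ℕ → ℕ, StrictMono φ ∧
      ∀ K : Set Z, IsCompact K → K ⊆ Z' → a ∉ K →
        TendstoUniformlyOn (fun k w => g (φ k) • w) (fun _ => b) atTop K

/-- The restricted action of `G` on `Z' ⊆ Z` is elementary. -/
def IsElementaryActionOn (G : Type*) {Z : Type*} [Group G] [MetricSpace Z] [MulAction G Z]
    (Z' : Set Z) : Prop :=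
  Finite G ∨ ∃ S : Set Z, S ⊆ Z' ∧ S.Nonempty ∧ S.encard ≤ 2 ∧ ∀ g : G, g • S = S

/-!
Equivariance and continuity of `i` push a conical sequence `gₙ` for `x ∈ ∂G` with poles
`(x₋, x₊)` forward to `i x`. If `i` is injective the poles stay distinct, and the convergence
property on `∂Y`, applied to subsequences of `gₙ`, forces every limiting pole pair to be
`(i x, i x₋)`, so `i x` is conical. Conversely, if `i x = i y` with `x ≠ y` and `gₙ` were conical
for `i x` with poles `(z₋, z₊)`, pass to a subsequence converging on `∂G` to `b` away from `a`;
evaluating at whichever of `x, y` is not `a`, and at a point `u ≠ a` with `i u ≠ i x`, gives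
`z₊ = i b = z₋`. Both directions need `i(∂G)` to have at least three points, which is where
non-elementarity enters.
-/

theorem Set.exists_mem_ne_ne_of_two_lt_encard {α : Type*} {s : Set α} (hs : 2 < s.encard)
    (p q : α) : ∃ w ∈ s, w ≠ p ∧ w ≠ q := by
  by_contra! h
  have hsub : s ⊆ {p, q} := fun w hw => by
    by_cases hwp : w = p
    · exact Or.inl hwp
    · exact Or.inr (h w hw hwp)
  have hpair : ({p, q} : Set α).encard ≤ 2 := by
    simpa [one_add_one_eq_two] using Set.encard_insert_le {q} p
  exact (hs.trans_le ((Set.encard_mono hsub).trans hpair)).false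

theorem tendstoUniformlyOn_of_subseq_tendstoUniformlyOn {α β : Type*} [UniformSpace β]
    {F : ℕ → α → β} {f : α → β} {s : Set α}
    (h : ∀ ns : ℕ → ℕ, StrictMono ns →
      ∃ ms : ℕ → ℕ, TendstoUniformlyOn (fun n => F (ns (ms n))) f atTop s) :
    TendstoUniformlyOn F f atTop s := by
  -- `UniformOnFun` turns uniform convergence on `s` into convergence in a topological space,
  -- where the subsequence principle `tendsto_of_subseq_tendsto` applies.
  have key : ∀ H : ℕ → α → β, TendstoUniformlyOn H f atTop s ↔
      Tendsto (fun n => UniformOnFun.ofFun {s} (H n)) atTop (𝓝 (UniformOnFun.ofFun {s} f)) := by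
    simp [UniformOnFun.tendsto_iff_tendstoUniformlyOn, Function.comp_def]
  rw [key]
  refine tendsto_of_subseq_tendsto fun ns hns => ?_
  obtain ⟨φ, -, hφ⟩ := strictMono_subseq_of_tendsto_atTop hns
  obtain ⟨ms, hms⟩ := h _ hφ
  exact ⟨φ ∘ ms, (key _).1 hms⟩

section ConvergenceOn

variable {G Z : Type*} [Group G] [MetricSpace Z] [MulAction G Z]

-- The last clauses of `IsConicalSeqOn` and `IsConvergenceActionOn` unfold to this.
def ConvLocUnifOn (Z' : Set Z) (g : ℕ → G) (a b : Z) : Prop :=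
  ∀ K : Set Z, IsCompact K → K ⊆ Z' → a ∉ K →
    TendstoUniformlyOn (fun n w => g n • w) (fun _ => b) atTop K

theorem ConvLocUnif.tendsto_smul {g : ℕ → G} {a b z : Z} (h : ConvLocUnif g a b) (hza : z ≠ a) :
    Tendsto (fun n => g n • z) atTop (𝓝 b) :=
  (h {z} isCompact_singleton fun ha => hza (Set.mem_singleton_iff.mp ha).symm).tendsto_at rfl

theorem ConvLocUnifOn.tendsto_smul {Z' : Set Z} {g : ℕ → G} {a b z : Z}
    (h : ConvLocUnifOn Z' g a b) (hz : z ∈ Z') (hza : z ≠ a) :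
    Tendsto (fun n => g n • z) atTop (𝓝 b) :=
  (h {z} isCompact_singleton (Set.singleton_subset_iff.mpr hz)
    fun ha => hza (Set.mem_singleton_iff.mp ha).symm).tendsto_at rfl

theorem ConvLocUnifOn.poles_eq {Z' S : Set Z} {g : ℕ → G} {a b z zm zp : Z}
    (h : ConvLocUnifOn Z' g a b) (hSZ : S ⊆ Z') (hS : 2 < S.encard) (hz : z ∈ S)
    (hzp : Tendsto (fun n => g n • z) atTop (𝓝 zp))
    (hzm : ∀ w ∈ S, w ≠ z → Tendsto (fun n => g n • w) atTop (𝓝 zm)) (hne : zm ≠ zp) :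
    a = z ∧ b = zm := by
  obtain ⟨w, hwS, hwz, hwa⟩ := S.exists_mem_ne_ne_of_two_lt_encard hS z a
  have hb : b = zm := tendsto_nhds_unique (h.tendsto_smul (hSZ hwS) hwa) (hzm w hwS hwz)
  refine ⟨by_contra fun haz => hne ?_, hb⟩
  exact hb.symm.trans (tendsto_nhds_unique (h.tendsto_smul (hSZ hz) (Ne.symm haz)) hzp)

theorem two_lt_encard_of_not_isElementaryActionOn {Z' S : Set Z}
    (hnel : ¬ IsElementaryActionOn G Z') (hSZ : S ⊆ Z') (hS : S.Nonempty)
    (hinv : ∀ g : G, g • S = S) : 2 < S.encard :=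
  lt_of_not_ge fun hle => hnel (Or.inr ⟨S, hSZ, hS, hle, hinv⟩)

theorem two_lt_encard_univ_of_not_isElementaryAction [Nonempty Z]
    (hne : ¬ IsElementaryAction G Z) : 2 < (Set.univ : Set Z).encard :=
  lt_of_not_ge fun hle => hne (Or.inr ⟨_, Set.univ_nonempty, hle, fun _ => Set.smul_set_univ⟩)

end ConvergenceOn

theorem smul_range_eq_of_equivariant {G B Z : Type*} [Group G] [MulAction G B] [MulAction G Z]
    {i : B → Z} (heq : ∀ (g : G) (x : B), i (g • x) = g • i x) (g : G) :
    g • Set.range i = Set.range i := by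
  rw [Set.smul_set_range, ← (MulAction.surjective g).range_comp i]
  simp only [Function.comp_def, heq]

namespace IsCannonThurston

variable {G B Z : Type*} [Group G] [MetricSpace B] [MulAction G B] [MetricSpace Z]
  [MulAction G Z] {i : B → Z}

theorem tendsto_smul (hi : IsCannonThurston G i) {ι : Type*} {l : Filter ι} {g : ι → G}
    {x y : B} (h : Tendsto (fun n => g n • x) l (𝓝 y)) :
    Tendsto (fun n => g n • i x) l (𝓝 (i y)) := by
  simpa only [Function.comp_def, hi.2] using (hi.1.tendsto y).comp h

theorem isConicalSeqOn {Z' : Set Z} (hi : IsCannonThurston G i) (hconv : IsConvergenceActionOn G Z')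
    (hiZ : Set.range i ⊆ Z') (hinj : Function.Injective i) (hthree : 2 < (Set.range i).encard)
    {g : ℕ → G} {x xm xp : B} (hg : IsConicalSeq g x xm xp) :
    IsConicalSeqOn Z' g (i x) (i xm) (i xp) := by
  obtain ⟨hginj, hne, hxp, hxm⟩ := hg
  have hne' : i xm ≠ i xp := hinj.ne hne
  have hp := hi.tendsto_smul hxp
  refine ⟨hiZ ⟨xm, rfl⟩, hiZ ⟨xp, rfl⟩, hginj, hne', hp, fun K hK hKZ hxK => ?_⟩
  refine tendstoUniformlyOn_of_subseq_tendstoUniformlyOn fun ns hns => ?_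
  obtain ⟨a, -, b, -, φ, hφ, hab⟩ := hconv.2.2 _ (hginj.comp hns.injective)
  have hsub : Tendsto (ns ∘ φ) atTop atTop := (hns.comp hφ).tendsto_atTop
  have hm : ∀ z ∈ Set.range i, z ≠ i x →
      Tendsto (fun k => g (ns (φ k)) • z) atTop (𝓝 (i xm)) := by
    rintro _ ⟨w, rfl⟩ hw
    exact (hi.tendsto_smul (hxm.tendsto_smul fun h => hw (congrArg i h))).comp hsub
  obtain ⟨rfl, rfl⟩ := ConvLocUnifOn.poles_eq hab hiZ hthree ⟨x, rfl⟩ (hp.comp hsub) hm hne'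
  exact ⟨φ, hab K hK hKZ hxK⟩

theorem not_isConicalLimitPointOn_of_eq {Z' : Set Z} (hi : IsCannonThurston G i)
    (hB : IsConvergenceAction G B) (hiZ : Set.range i ⊆ Z') (hthree : 2 < (Set.range i).encard)
    {x y : B} (hxy : x ≠ y) (hixy : i x = i y) : ¬ IsConicalLimitPointOn G Z' (i x) := by
  rintro ⟨g, zm, zp, -, -, hginj, hne, hzp, hzm⟩
  obtain ⟨a, b, φ, hφ, hab⟩ := hB.2 g hginj
  obtain ⟨v, hva, hv⟩ : ∃ v, v ≠ a ∧ i v = i x := by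
    rcases eq_or_ne x a with rfl | hxa
    · exact ⟨y, hxy.symm, hixy.symm⟩
    · exact ⟨x, hxa, rfl⟩
  obtain ⟨_, ⟨u, rfl⟩, hux, hua⟩ :=
    (Set.range i).exists_mem_ne_ne_of_two_lt_encard hthree (i x) (i a)
  have hbp : i b = zp := tendsto_nhds_unique (hv ▸ hi.tendsto_smul (hab.tendsto_smul hva))
    (hzp.comp hφ.tendsto_atTop)
  have hbm : i b = zm :=
    tendsto_nhds_unique (hi.tendsto_smul (hab.tendsto_smul fun h => hua (congrArg i h)))
      ((ConvLocUnifOn.tendsto_smul hzm (hiZ ⟨u, rfl⟩) hux).comp hφ.tendsto_atTop)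
  exact hne (hbm.symm.trans hbp)

end IsCannonThurston

theorem stmt10_general {G B Y Ybar : Type*} [Group G]
    [MetricSpace B] [CompactSpace B] [MulAction G B]
    [MetricSpace Ybar] [MulAction G Ybar]
    -- `G` is a non-elementary word-hyperbolic group with Gromov boundary `B`
    (hB : IsHypBoundary G B) (hGne : ¬ IsElementaryAction G B)
    -- the hyperbolic compactification `Ybar = Y ∪ ∂Y`
    (ιY : Y → Ybar)
    -- the induced action of `G` on `∂Y` is a non-elementary convergence action
    (hconv : IsConvergenceActionOn G ((Set.range ιY)ᶜ))
    (hnel : ¬ IsElementaryActionOn G ((Set.range ιY)ᶜ))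
    -- the Cannon–Thurston map `i : ∂G → ∂Y` exists
    (i : B → Ybar) (hi : IsCannonThurston G i) (hiR : Set.range i ⊆ (Set.range ιY)ᶜ) :
    (∃ z ∈ Set.range i, ¬ IsConicalLimitPointOn G ((Set.range ιY)ᶜ) z) ↔
      ¬ Function.Injective i := by
  constructor
  · rintro ⟨_, ⟨x, rfl⟩, hnc⟩ hinj
    have : Nonempty B := ⟨x⟩
    have hthree : 2 < (Set.range i).encard := by
      rw [← Set.image_univ, hinj.injOn.encard_image]
      exact two_lt_encard_univ_of_not_isElementaryAction hGne
    obtain ⟨g, xm, xp, hg⟩ := hB.2 x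
    exact hnc ⟨g, i xm, i xp, hi.isConicalSeqOn hconv hiR hinj hthree hg⟩
  · intro hni
    obtain ⟨x, y, hixy, hxy⟩ := Function.not_injective_iff.mp hni
    have hthree : 2 < (Set.range i).encard := two_lt_encard_of_not_isElementaryActionOn hnel hiR
      ⟨i x, x, rfl⟩ (smul_range_eq_of_equivariant hi.2)
    exact ⟨i x, ⟨x, rfl⟩, hi.not_isConicalLimitPointOn_of_eq hB.1 hiR hthree hxy hixy⟩

/-- Let the non-elementary word-hyperbolic group `G` (with Gromov boundary
`B`) act properly discontinuously by isometries on a proper geodesic Gromov-hyperbolic space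
`Y` without accidental parabolics, and suppose the Cannon–Thurston map `i : ∂G → ∂Y` exists,
where `∂Y = Ybar \ ιY(Y)` is the boundary of the hyperbolic compactification `Ybar` and the
induced action of `G` on `∂Y` is a non-elementary convergence action.  Then there exists a
point `z ∈ i(∂G)` which is non-conical for the action of `G` on `∂Y` iff `i` is not
injective. -/
theorem stmt10 {G B Y Ybar : Type*} [Group G]
    [MetricSpace B] [CompactSpace B] [MulAction G B]
    [MetricSpace Y] [ProperSpace Y] [MulAction G Y]
    [MetricSpace Ybar] [CompactSpace Ybar] [MulAction G Ybar]
    -- `G` is a non-elementary word-hyperbolic group with Gromov boundary `B`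
    (hB : IsHypBoundary G B) (hGne : ¬ IsElementaryAction G B)
    -- `Y` is a proper geodesic Gromov-hyperbolic space
    (hgeo : IsGeodesicSpace Y) (δY : ℝ) (hδY : 0 ≤ δY) (hslim : SlimTriangles Y δY)
    -- the action of `G` on `Y` is properly discontinuous and isometric
    [ProperlyDiscontinuousSMul G Y] (hisom : ∀ g : G, Isometry fun y : Y => g • y)
    -- the hyperbolic compactification `Ybar = Y ∪ ∂Y`
    (ιY : Y → Ybar) (hYemb : IsEmbedding ιY) (hYdense : Dense (Set.range ιY))
    (hYeq : ∀ (g : G) (y : Y), ιY (g • y) = g • ιY y)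
    (hYcont : ∀ g : G, Continuous fun w : Ybar => g • w)
    -- the induced action of `G` on `∂Y` is a non-elementary convergence action
    (hconv : IsConvergenceActionOn G ((Set.range ιY)ᶜ))
    (hnel : ¬ IsElementaryActionOn G ((Set.range ιY)ᶜ))
    -- without accidental parabolics: no infinite-order element acts parabolically on `∂Y`
    (hnoap : ∀ g : G, ¬ IsOfFinOrder g →
      ¬ ∃ a : Ybar, {w : Ybar | w ∈ (Set.range ιY)ᶜ ∧ g • w = w} = {a})
    -- the Cannon–Thurston map `i : ∂G → ∂Y` exists
    (i : B → Ybar) (hi : IsCannonThurston G i) (hiR : Set.range i ⊆ (Set.range ιY)ᶜ) :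
    (∃ z ∈ Set.range i, ¬ IsConicalLimitPointOn G ((Set.range ιY)ᶜ) z) ↔
      ¬ Function.Injective i :=
  stmt10_general hB hGne ιY hconv hnel i hi hiR
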